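/- Let (A, R) be a complete filtered Rota–Baxter algebra of weight λ ≠ 0 over a field K of characteristic zero, R̃ := −λ·id_A − R, and let χ_λ : A₁ → A₁ be the unique map with (χ_λ − id)(Aₙ) ⊆ A₂ₙ for all n ≥ 1 and exp(R(χ_λ(x)))·exp(R̃(χ_λ(x))) = exp(−λx) for all x ∈ A₁. Then χ_λ is a bijection of A₁ onto itself with inverse χ_λ⁻¹(x) = −(1/λ)·log(exp(R(x))·exp(R̃(x))) for all x ∈ A₁. -/

import Mathlib

/-! Write `E z = exp (R z) * exp (R̃ z)`, so that the defining identity reads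
`E (χ x) = exp (-λ x)`. Then `ψ x = -(1/λ) log (E x)` satisfies `ψ (χ x) = x` because
`log ∘ exp = id` on `A₁`. If `a - b ∈ Aₙ` then `exp a - exp b ≡ a - b` modulo `Aₙ₊₁`, hence
`E x - E y ≡ (R + R̃) (x - y) = -λ (x - y)`; as `λ ≠ 0` this makes `E` injective on `A₁`, and
`E (χ (ψ x)) = exp (log (E x)) = E x` gives `χ (ψ x) = x`.

Modulo `A_N` both series are polynomials, so `log ∘ exp = id` reduces to
`log (1 + (exp X - 1)) ≡ X` modulo `X ^ N` in `K⟦X⟧`, which follows by differentiation. -/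

open scoped Classical

/-- A complete filtered algebra over a field `K` of characteristic zero: an associative unital
`K`-algebra `A` with a decreasing filtration `A = F 0 ⊇ F 1 ⊇ ⋯` by (two-sided, here
`K`-submodules closed under multiplication in the filtered sense) ideals, which is separated
and complete: every series `Σ aₙ` with `aₙ ∈ F n` converges (has a limit in the filtration
topology). -/
structure CompleteFilteredAlgebra (K A : Type*) [Field K] [CharZero K] [Ring A] [Algebra K A] where
  F : ℕ → Submodule K A
  F_zero : F 0 = ⊤
  F_succ_le : ∀ n : ℕ, F (n + 1) ≤ F n
  F_mul : ∀ m n : ℕ, ∀ x ∈ F m, ∀ y ∈ F n, x * y ∈ F (m + n)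
  F_sep : ∀ x : A, (∀ n : ℕ, x ∈ F n) → x = 0
  F_complete : ∀ a : ℕ → A, (∀ n : ℕ, a n ∈ F n) →
    ∃ s : A, ∀ N : ℕ, s - ∑ n ∈ Finset.range N, a n ∈ F N

namespace CompleteFilteredAlgebra

variable {K A : Type*} [Field K] [CharZero K] [Ring A] [Algebra K A]

/-- The exponential `exp x = Σ_{n≥0} xⁿ/n!`, defined (as the limit of its partial sums) for
every `x ∈ F 1`; junk value `0` elsewhere. -/
noncomputable def exp (FA : CompleteFilteredAlgebra K A) (x : A) : A :=
  if h : ∀ n : ℕ, ((n.factorial : K)⁻¹ • x ^ n) ∈ FA.F n then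
    Classical.choose (FA.F_complete _ h)
  else 0

/-- The logarithm `log (1 + y) = Σ_{n≥1} (-1)^(n-1) yⁿ/n`, defined (as the limit of its partial
sums) whenever the argument lies in `1 + F 1`; junk value `0` elsewhere. (The `n = 0` term of
the defining sequence is `0` since `1/0 = 0` in `K`.) -/
noncomputable def log (FA : CompleteFilteredAlgebra K A) (y : A) : A :=
  if h : ∀ n : ℕ, ((((-1 : K) ^ (n - 1)) / (n : K)) • (y - 1) ^ n) ∈ FA.F n then
    Classical.choose (FA.F_complete _ h)
  else 0

end CompleteFilteredAlgebra

def logCoeff (K : Type*) [Field K] (n : ℕ) : K := (-1) ^ (n - 1) / n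

namespace PowerSeries

theorem X_pow_succ_dvd_of_X_pow_dvd_derivative {R : Type*} [CommRing R] [IsDomain R] [CharZero R]
    {f : R⟦X⟧} {M : ℕ} (h0 : constantCoeff f = 0) (hd : X ^ M ∣ d⁄dX R f) :
    X ^ (M + 1) ∣ f := by
  rw [X_pow_dvd_iff] at hd ⊢
  rintro (_ | j) hj
  · rwa [coeff_zero_eq_constantCoeff_apply]
  · have := hd j (by omega)
    rw [coeff_derivative] at this
    exact (mul_eq_zero.mp this).resolve_right (Nat.cast_add_one_ne_zero j)

variable {K : Type*} [Field K] [CharZero K]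

theorem derivative_sum_logCoeff_smul_pow (u : K⟦X⟧) (M : ℕ) :
    d⁄dX K (∑ k ∈ Finset.range (M + 1), logCoeff K k • u ^ k) =
      (∑ j ∈ Finset.range M, (-u) ^ j) * d⁄dX K u := by
  rw [map_sum, Finset.sum_range_succ', Finset.sum_mul]
  simp only [pow_zero, Derivation.map_smul, Derivation.map_one_eq_zero, smul_zero, add_zero]
  refine Finset.sum_congr rfl fun j _ => ?_
  have hj : (j + 1 : K) ≠ 0 := Nat.cast_add_one_ne_zero j
  rw [Derivation.leibniz_pow, Nat.add_sub_cancel, ← neg_one_smul K u, smul_pow, logCoeff,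
    Nat.add_sub_cancel, ← Nat.cast_smul_eq_nsmul K, smul_smul, smul_eq_mul, smul_mul_assoc]
  push_cast
  rw [div_mul_cancel₀ _ hj]

/-- `log (exp X) = X` modulo `X ^ (M + 1)`. -/
theorem X_pow_dvd_sum_logCoeff_smul_exp_sub_one_pow_sub_X (M : ℕ) :
    X ^ (M + 1) ∣ ∑ k ∈ Finset.range (M + 1), logCoeff K k • (exp K - 1) ^ k - X := by
  set u := exp K - 1
  have hu : X ∣ u := X_dvd_iff.mpr (by simp [u])
  have hgeom : (∑ j ∈ Finset.range M, (-u) ^ j) * exp K = 1 - (-u) ^ M := by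
    convert geom_sum_mul_neg (-u) M using 2
    ring
  apply X_pow_succ_dvd_of_X_pow_dvd_derivative
  · rw [map_sub, map_sum, constantCoeff_X, sub_zero]
    refine Finset.sum_eq_zero fun k _ => ?_
    rcases k with _ | k <;> simp [logCoeff, u]
  · rw [map_sub, derivative_sum_logCoeff_smul_pow, map_sub, Derivation.map_one_eq_zero, sub_zero,
      derivative_exp, derivative_X, hgeom, sub_sub_cancel_left]
    exact (pow_dvd_pow_of_dvd (dvd_neg.mpr hu) M).neg_right

theorem X_pow_dvd_sum_logCoeff_smul_trunc_exp_sub_one_pow_sub_X (M : ℕ) :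
    X ^ (M + 1) ∣ ((∑ k ∈ Finset.range (M + 1),
      logCoeff K k • (trunc (M + 1) (exp K) - 1) ^ k - Polynomial.X : Polynomial K) : K⟦X⟧) := by
  have htrunc :
      X ^ (M + 1) ∣ ((trunc (M + 1) (exp K) - 1 : Polynomial K) : K⟦X⟧) - (exp K - 1) := by
    rw [Polynomial.coe_sub, Polynomial.coe_one, sub_sub_sub_cancel_right, dvd_sub_comm]
    exact ⟨_, sub_eq_of_eq_add (eq_X_pow_mul_shift_add_trunc _ _)⟩
  have hsum : X ^ (M + 1) ∣ ((∑ k ∈ Finset.range (M + 1),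
      logCoeff K k • (trunc (M + 1) (exp K) - 1) ^ k : Polynomial K) : K⟦X⟧) -
        ∑ k ∈ Finset.range (M + 1), logCoeff K k • (exp K - 1) ^ k := by
    rw [← Polynomial.coeToPowerSeries.ringHom_apply, map_sum, ← Finset.sum_sub_distrib]
    refine Finset.dvd_sum fun k _ => ?_
    rw [Polynomial.coeToPowerSeries.ringHom_apply, Polynomial.coe_smul, Polynomial.coe_pow,
      ← smul_sub]
    exact dvd_smul_of_dvd _ (htrunc.trans (sub_dvd_pow_sub_pow _ _ k))
  have h := dvd_add hsum (X_pow_dvd_sum_logCoeff_smul_exp_sub_one_pow_sub_X (K := K) M)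
  rwa [sub_add_sub_cancel, ← Polynomial.coe_X, ← Polynomial.coe_sub, Polynomial.coe_X] at h

end PowerSeries

namespace CompleteFilteredAlgebra

variable {K A : Type*} [Field K] [CharZero K] [Ring A] [Algebra K A]
  (FA : CompleteFilteredAlgebra K A)

theorem F_antitone : Antitone FA.F := antitone_nat_of_succ_le FA.F_succ_le

theorem mem_F_zero (x : A) : x ∈ FA.F 0 := FA.F_zero ▸ Submodule.mem_top

theorem eq_of_forall_sub_mem {x y : A} (h : ∀ n, x - y ∈ FA.F (n + 1)) : x = y :=
  sub_eq_zero.mp <| FA.F_sep _ fun n => FA.F_antitone n.le_succ (h n)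

variable {FA}

theorem pow_mem {x : A} (hx : x ∈ FA.F 1) (n : ℕ) : x ^ n ∈ FA.F n := by
  induction n with
  | zero => exact FA.mem_F_zero _
  | succ n ih => simpa [pow_succ, add_comm] using FA.F_mul n 1 _ ih x hx

theorem mul_sub_one_mem {a b : A} (ha : a - 1 ∈ FA.F 1) (hb : b - 1 ∈ FA.F 1) :
    a * b - 1 ∈ FA.F 1 := by
  have hab : a * b - 1 = (a - 1) * (b - 1) + (a - 1) + (b - 1) := by noncomm_ring
  rw [hab]
  exact add_mem (add_mem (FA.F_antitone (by omega) (FA.F_mul 1 1 _ ha _ hb)) ha) hb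

section Powers

variable {x y : A} {n : ℕ}

theorem pow_succ_sub_pow_succ_mem (hx : x ∈ FA.F 1) (hy : y ∈ FA.F 1) (hxy : x - y ∈ FA.F n)
    (k : ℕ) : x ^ (k + 1) - y ^ (k + 1) ∈ FA.F (n + k) := by
  induction k with
  | zero => simpa using hxy
  | succ k ih =>
    have h : x ^ (k + 2) - y ^ (k + 2) =
        x * (x ^ (k + 1) - y ^ (k + 1)) + (x - y) * y ^ (k + 1) := by
      rw [pow_succ' x, pow_succ' y]
      noncomm_ring
    rw [h]
    refine add_mem ?_ (FA.F_mul _ _ _ hxy _ (pow_mem hy _))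
    have h' := FA.F_mul 1 _ x hx _ ih
    rwa [show 1 + (n + k) = n + (k + 1) by omega] at h'

theorem pow_sub_pow_mem (hx : x ∈ FA.F 1) (hy : y ∈ FA.F 1) (hxy : x - y ∈ FA.F n)
    (k : ℕ) : x ^ k - y ^ k ∈ FA.F n := by
  rcases k with _ | k
  · simp
  · exact FA.F_antitone (by omega) (pow_succ_sub_pow_succ_mem hx hy hxy k)

theorem pow_sub_pow_mem_of_ne_one (hx : x ∈ FA.F 1) (hy : y ∈ FA.F 1) (hxy : x - y ∈ FA.F n)
    {k : ℕ} (hk : k ≠ 1) : x ^ k - y ^ k ∈ FA.F (n + 1) := by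
  rcases k with _ | _ | k
  · simp
  · contradiction
  · exact FA.F_antitone (by omega) (pow_succ_sub_pow_succ_mem hx hy hxy (k + 1))

theorem sum_smul_pow_sub_sum_smul_pow_sub_mem (hx : x ∈ FA.F 1) (hy : y ∈ FA.F 1)
    (hxy : x - y ∈ FA.F n) (c : ℕ → K) {N : ℕ} (hN : 2 ≤ N) :
    ∑ k ∈ Finset.range N, c k • x ^ k - ∑ k ∈ Finset.range N, c k • y ^ k - c 1 • (x - y) ∈
      FA.F (n + 1) := by
  rw [← Finset.sum_sub_distrib, ← Finset.add_sum_erase _ _ (Finset.mem_range.mpr hN), pow_one,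
    pow_one, ← smul_sub, add_sub_cancel_left]
  refine Submodule.sum_mem _ fun k hk => ?_
  rw [← smul_sub]
  exact Submodule.smul_mem _ _ (pow_sub_pow_mem_of_ne_one hx hy hxy (Finset.ne_of_mem_erase hk))

end Powers

theorem sub_sub_smul_sub_mem_of_sub_sum_mem {c : ℕ → K} {x y s t : A} {n : ℕ}
    (hx : x ∈ FA.F 1) (hy : y ∈ FA.F 1) (hxy : x - y ∈ FA.F n) (hn : 1 ≤ n)
    (hs : s - ∑ k ∈ Finset.range (n + 1), c k • x ^ k ∈ FA.F (n + 1))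
    (ht : t - ∑ k ∈ Finset.range (n + 1), c k • y ^ k ∈ FA.F (n + 1)) :
    s - t - c 1 • (x - y) ∈ FA.F (n + 1) := by
  have h := sum_smul_pow_sub_sum_smul_pow_sub_mem hx hy hxy c (N := n + 1) (by omega)
  convert add_mem (sub_mem hs ht) h using 1
  abel

theorem exp_sub_sum_mem {x : A} (hx : x ∈ FA.F 1) (N : ℕ) :
    FA.exp x - ∑ n ∈ Finset.range N, (n.factorial : K)⁻¹ • x ^ n ∈ FA.F N := by
  have h : ∀ n : ℕ, (n.factorial : K)⁻¹ • x ^ n ∈ FA.F n := fun n =>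
    Submodule.smul_mem _ _ (pow_mem hx n)
  rw [exp, dif_pos h]
  exact Classical.choose_spec (FA.F_complete _ h) N

theorem log_sub_sum_mem {y : A} (hy : y - 1 ∈ FA.F 1) (N : ℕ) :
    FA.log y - ∑ n ∈ Finset.range N, logCoeff K n • (y - 1) ^ n ∈ FA.F N := by
  have h : ∀ n : ℕ, ((-1 : K) ^ (n - 1) / n) • (y - 1) ^ n ∈ FA.F n := fun n =>
    Submodule.smul_mem _ _ (pow_mem hy n)
  rw [log, dif_pos h]
  exact Classical.choose_spec (FA.F_complete _ h) N

theorem exp_sub_one_mem {x : A} (hx : x ∈ FA.F 1) : FA.exp x - 1 ∈ FA.F 1 := by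
  simpa using exp_sub_sum_mem hx 1

theorem log_mem {y : A} (hy : y - 1 ∈ FA.F 1) : FA.log y ∈ FA.F 1 := by
  simpa [logCoeff] using log_sub_sum_mem hy 1

theorem exp_sub_exp_sub_sub_mem {x y : A} {n : ℕ} (hx : x ∈ FA.F 1) (hy : y ∈ FA.F 1)
    (hxy : x - y ∈ FA.F n) (hn : 1 ≤ n) : FA.exp x - FA.exp y - (x - y) ∈ FA.F (n + 1) := by
  simpa using sub_sub_smul_sub_mem_of_sub_sum_mem hx hy hxy hn
    (exp_sub_sum_mem hx (n + 1)) (exp_sub_sum_mem hy (n + 1))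

theorem log_sub_log_sub_sub_mem {y₁ y₂ : A} {n : ℕ} (hy₁ : y₁ - 1 ∈ FA.F 1)
    (hy₂ : y₂ - 1 ∈ FA.F 1) (hy : y₁ - y₂ ∈ FA.F n) (hn : 1 ≤ n) :
    FA.log y₁ - FA.log y₂ - (y₁ - y₂) ∈ FA.F (n + 1) := by
  have h := sub_sub_smul_sub_mem_of_sub_sum_mem hy₁ hy₂ (by rwa [sub_sub_sub_cancel_right]) hn
    (log_sub_sum_mem hy₁ (n + 1)) (log_sub_sum_mem hy₂ (n + 1))
  simpa [logCoeff] using h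

theorem injOn_of_sub_sub_smul_sub_mem {S : Set A} {f : A → A} {c : K} (hc : c ≠ 0)
    (hS : ∀ x ∈ S, ∀ y ∈ S, x - y ∈ FA.F 1)
    (hf : ∀ x ∈ S, ∀ y ∈ S, ∀ n, 1 ≤ n → x - y ∈ FA.F n →
      f x - f y - c • (x - y) ∈ FA.F (n + 1)) :
    S.InjOn f := by
  intro x hx y hy hfxy
  refine FA.eq_of_forall_sub_mem fun n => ?_
  induction n with
  | zero => exact hS x hx y hy
  | succ n ih =>
    have h := hf x hx y hy (n + 1) (by omega) ih
    rw [hfxy, sub_self, zero_sub, neg_mem_iff] at h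
    simpa [smul_smul, inv_mul_cancel₀ hc] using Submodule.smul_mem _ c⁻¹ h

theorem log_injOn : Set.InjOn FA.log {y | y - 1 ∈ FA.F 1} :=
  injOn_of_sub_sub_smul_sub_mem one_ne_zero
    (fun _ (hy₁ : _ - 1 ∈ FA.F 1) _ (hy₂ : _ - 1 ∈ FA.F 1) => by
      simpa using sub_mem hy₁ hy₂)
    (fun _ (hy₁ : _ - 1 ∈ FA.F 1) _ (hy₂ : _ - 1 ∈ FA.F 1) _ hn hy => by
      simpa using log_sub_log_sub_sub_mem hy₁ hy₂ hy hn)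

theorem aeval_mem_of_coeff_eq_zero {z : A} (hz : z ∈ FA.F 1) {P : Polynomial K} {N : ℕ}
    (hP : ∀ i < N, P.coeff i = 0) : Polynomial.aeval z P ∈ FA.F N := by
  rw [Polynomial.aeval_eq_sum_range]
  refine Submodule.sum_mem _ fun i _ => ?_
  by_cases hi : i < N
  · simp [hP i hi]
  · exact Submodule.smul_mem _ _ (FA.F_antitone (by omega) (pow_mem hz i))

theorem aeval_trunc_exp (z : A) (N : ℕ) :
    Polynomial.aeval z (PowerSeries.trunc N (PowerSeries.exp K)) =
      ∑ n ∈ Finset.range N, (n.factorial : K)⁻¹ • z ^ n := by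
  rw [Polynomial.aeval_def, PowerSeries.eval₂_trunc_eq_sum_range]
  simp [PowerSeries.coeff_exp, Algebra.smul_def]

theorem log_exp {x : A} (hx : x ∈ FA.F 1) : FA.log (FA.exp x) = x := by
  refine FA.eq_of_forall_sub_mem fun M => ?_
  set u : Polynomial K := PowerSeries.trunc (M + 1) (PowerSeries.exp K) - 1
  set w := Polynomial.aeval x u
  have hw : FA.exp x - 1 - w ∈ FA.F (M + 1) := by
    simpa [w, u, aeval_trunc_exp] using exp_sub_sum_mem hx (M + 1)
  have hw₁ : w ∈ FA.F 1 := by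
    simpa using sub_mem (exp_sub_one_mem hx) (FA.F_antitone (by omega) hw)
  have hpoly : Polynomial.aeval x
      (∑ k ∈ Finset.range (M + 1), logCoeff K k • u ^ k - Polynomial.X) ∈ FA.F (M + 1) :=
    aeval_mem_of_coeff_eq_zero hx fun i hi => by
      rw [← Polynomial.coeff_coe]
      exact PowerSeries.X_pow_dvd_iff.mp
        (PowerSeries.X_pow_dvd_sum_logCoeff_smul_trunc_exp_sub_one_pow_sub_X M) i hi
  have hpow : ∑ k ∈ Finset.range (M + 1), logCoeff K k • ((FA.exp x - 1) ^ k - w ^ k) ∈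
      FA.F (M + 1) :=
    Submodule.sum_mem _ fun k _ =>
      Submodule.smul_mem _ _ (pow_sub_pow_mem (exp_sub_one_mem hx) hw₁ hw k)
  simp only [map_sub, map_sum, map_smul, map_pow, Polynomial.aeval_X] at hpoly
  convert add_mem (add_mem (log_sub_sum_mem (exp_sub_one_mem hx) (M + 1)) hpow) hpoly using 1
  simp only [smul_sub, Finset.sum_sub_distrib, w]
  abel

theorem exp_log {y : A} (hy : y - 1 ∈ FA.F 1) : FA.exp (FA.log y) = y :=
  log_injOn (exp_sub_one_mem (log_mem hy)) hy (log_exp (log_mem hy))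

theorem exp_mul_exp_sub_exp_mul_exp_sub_mem {a b a' b' : A} {n : ℕ} (ha : a ∈ FA.F 1)
    (hb : b ∈ FA.F 1) (ha' : a' ∈ FA.F 1) (hb' : b' ∈ FA.F 1) (haa' : a - a' ∈ FA.F n)
    (hbb' : b - b' ∈ FA.F n) (hn : 1 ≤ n) :
    FA.exp a * FA.exp b - FA.exp a' * FA.exp b' - (a - a' + (b - b')) ∈ FA.F (n + 1) := by
  have hexpa := exp_sub_exp_sub_sub_mem ha ha' haa' hn
  have hexpb := exp_sub_exp_sub_sub_mem hb hb' hbb' hn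
  have hexpa' : FA.exp a - FA.exp a' ∈ FA.F n := by
    simpa using add_mem (FA.F_antitone n.le_succ hexpa) haa'
  have hexpb' : FA.exp b - FA.exp b' ∈ FA.F n := by
    simpa using add_mem (FA.F_antitone n.le_succ hexpb) hbb'
  have h₁ := FA.F_mul 1 n _ (exp_sub_one_mem ha) _ hexpb'
  have h₂ := FA.F_mul n 1 _ hexpa' _ (exp_sub_one_mem hb')
  rw [add_comm 1 n] at h₁
  convert add_mem (add_mem (add_mem h₁ h₂) hexpa) hexpb using 1
  noncomm_ring

theorem injOn_exp_mul_exp {f g : A →ₗ[K] A} {c : K} (hc : c ≠ 0)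
    (hf : ∀ n, ∀ x ∈ FA.F n, f x ∈ FA.F n) (hg : ∀ n, ∀ x ∈ FA.F n, g x ∈ FA.F n)
    (hfg : ∀ x, f x + g x = c • x) :
    Set.InjOn (fun z => FA.exp (f z) * FA.exp (g z)) (FA.F 1) := by
  refine injOn_of_sub_sub_smul_sub_mem hc (fun x hx y hy => sub_mem hx hy)
    fun x hx y hy n hn hxy => ?_
  convert exp_mul_exp_sub_exp_mul_exp_sub_mem (hf 1 x hx) (hg 1 x hx) (hf 1 y hy) (hg 1 y hy)
    (map_sub f x y ▸ hf n _ hxy) (map_sub g x y ▸ hg n _ hxy) hn using 2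
  rw [sub_add_sub_comm, hfg, hfg, smul_sub]

end CompleteFilteredAlgebra

open CompleteFilteredAlgebra

theorem weighted_bch_recursion_inverse_general {K A : Type*} [Field K] [CharZero K]
    [Ring A] [Algebra K A] (FA : CompleteFilteredAlgebra K A) (lam : K) (hlam : lam ≠ 0)
    (R : A →ₗ[K] A)
    (hRfil : ∀ n : ℕ, ∀ x ∈ FA.F n, R x ∈ FA.F n)
    (χ : FA.F 1 → FA.F 1)
    (hfact : ∀ x : FA.F 1,
      FA.exp (R (χ x)) * FA.exp (-(lam • (χ x : A)) - R (χ x)) =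
        FA.exp (-(lam • (x : A)))) :
    Function.Bijective χ ∧
    ∃ ψ : FA.F 1 → FA.F 1, Function.LeftInverse ψ χ ∧ Function.RightInverse ψ χ ∧
      ∀ x : FA.F 1, (ψ x : A) =
        -(lam⁻¹ • FA.log (FA.exp (R x) * FA.exp (-(lam • (x : A)) - R x))) := by
  set Rt : A →ₗ[K] A := -lam • LinearMap.id - R
  have hRt_apply : ∀ z, Rt z = -(lam • z) - R z := fun z => by simp [Rt]
  have hRt : ∀ n, ∀ z ∈ FA.F n, Rt z ∈ FA.F n := fun n z hz =>
    hRt_apply z ▸ sub_mem (neg_mem (Submodule.smul_mem _ _ hz)) (hRfil n z hz)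
  simp only [← hRt_apply] at hfact ⊢
  set E : A → A := fun z => FA.exp (R z) * FA.exp (Rt z)
  have hE₁ : ∀ z ∈ FA.F 1, E z - 1 ∈ FA.F 1 := fun z hz =>
    mul_sub_one_mem (exp_sub_one_mem (hRfil 1 z hz)) (exp_sub_one_mem (hRt 1 z hz))
  have hE_inj : Set.InjOn E (FA.F 1) :=
    injOn_exp_mul_exp (neg_ne_zero.mpr hlam) hRfil hRt fun z => by rw [hRt_apply, neg_smul]; abel
  let ψ : FA.F 1 → FA.F 1 := fun x =>
    ⟨-(lam⁻¹ • FA.log (E x)), neg_mem (Submodule.smul_mem _ _ (log_mem (hE₁ x x.2)))⟩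
  have hleft : Function.LeftInverse ψ χ := fun x => Subtype.ext <| by
    simp only [ψ, E, hfact, log_exp (neg_mem (Submodule.smul_mem _ lam x.2)), smul_neg,
      smul_smul, inv_mul_cancel₀ hlam, one_smul, neg_neg]
  have hright : Function.RightInverse ψ χ := fun x => Subtype.ext <| hE_inj (χ (ψ x)).2 x.2 <| by
    simp only [E, hfact, ψ, smul_neg, neg_neg, smul_smul, mul_inv_cancel₀ hlam, one_smul,
      exp_log (hE₁ x x.2)]
  exact ⟨⟨hleft.injective, hright.surjective⟩, ψ, hleft, hright, fun _ => rfl⟩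

/-- For a complete filtered Rota–Baxter algebra `(A, R)` of weight `lam ≠ 0`
over a field `K` of characteristic zero, with `R̃ := -lam • id - R`, the unique map
`χ_lam : A₁ → A₁` with `(χ_lam - id)(Aₙ) ⊆ A₂ₙ` and
`exp(R(χ_lam x)) * exp(R̃(χ_lam x)) = exp(-lam • x)` is a bijection of `A₁` onto itself, with
inverse `χ_lam⁻¹(x) = -(1/lam) • log(exp(R x) * exp(R̃ x))`. -/
theorem weighted_bch_recursion_inverse {K A : Type*} [Field K] [CharZero K]
    [Ring A] [Algebra K A] (FA : CompleteFilteredAlgebra K A) (lam : K) (hlam : lam ≠ 0)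
    (R : A →ₗ[K] A)
    (hRfil : ∀ n : ℕ, ∀ x ∈ FA.F n, R x ∈ FA.F n)
    (hRB : ∀ x y : A, R x * R y = R (R x * y + x * R y + lam • (x * y)))
    (χ : FA.F 1 → FA.F 1)
    (hdev : ∀ n : ℕ, 1 ≤ n → ∀ x : FA.F 1, (x : A) ∈ FA.F n →
      ((χ x : A) - (x : A)) ∈ FA.F (2 * n))
    (hfact : ∀ x : FA.F 1,
      FA.exp (R (χ x)) * FA.exp (-(lam • (χ x : A)) - R (χ x)) =
        FA.exp (-(lam • (x : A)))) :
    Function.Bijective χ ∧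
    ∃ ψ : FA.F 1 → FA.F 1, Function.LeftInverse ψ χ ∧ Function.RightInverse ψ χ ∧
      ∀ x : FA.F 1, (ψ x : A) =
        -(lam⁻¹ • FA.log (FA.exp (R x) * FA.exp (-(lam • (x : A)) - R x))) :=
  weighted_bch_recursion_inverse_general FA lam hlam R hRfil χ hfact
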